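/- Let x_1,…,x_t be elements of the graph group G_F such that x_i ∨ x_j is finite for all i,j ∈ {1,…,t}. Then x_1 ∨ x_2 ∨ ⋯ ∨ x_t is finite. -/

import Mathlib

/-!
Letters `A = g_i^{±1}` are pushed one after another onto a piling with one stack per generator
(a heap in Viennot's sense): a letter cancels when the top of its stack is its inverse, and
otherwise leaves a bead on its own stack and a blank on the stacks of its neighbours in `F`.
This is an action of `G_F`, and reduced words are exactly the cancel-free ones, so the first
letters of `x` are read off the tops of the piling of `x⁻¹`. Two distinct first letters of `x`
therefore commute, and if `A ≤ x` but `A ≰ w` for some `w ≤ x`, then `A` commutes with `w` and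
`w ≤ wA ≤ x`.

Hence stripping a letter (`x ↦ A⁻¹x` if `A ≤ x`, and `x` otherwise) is monotone. Stripping a
first letter of `a` from `a`, `b` and `c` preserves pairwise boundedness and shortens `a`, which
proves by induction that three pairwise bounded elements have a common upper bound; stripping
common first letters also gives meets, hence joins of bounded sets (take an upper bound of least
length). Finally, replacing `x₁, …, xₙ` by `x₁ ∨ x₀, …, xₙ ∨ x₀` keeps a family pairwise bounded
by the case of three elements, and the theorem follows by induction on the size of the
family.
-/

open Pointwise

namespace GraphGroupPaper

/-- The set of commutator relators: `gᵢ` and `gⱼ` commute for every pair of distinct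
`i, j` with `{i,j} ∉ F`. -/
def Rels (k : ℕ) (F : Set (Sym2 (Fin k))) : Set (FreeGroup (Fin k)) :=
  {w | ∃ i j : Fin k, i ≠ j ∧ s(i, j) ∉ F ∧
      w = FreeGroup.of i * FreeGroup.of j * (FreeGroup.of i)⁻¹ * (FreeGroup.of j)⁻¹}

/-- The graph group `G_F` with generators `g₁, …, g_k` and relations `gᵢgⱼ = gⱼgᵢ`
for all distinct `i, j` with `{i,j} ∉ F`. -/
abbrev Grp (k : ℕ) (F : Set (Sym2 (Fin k))) := PresentedGroup (Rels k F)

/-- The generator `gᵢ` of the graph group. -/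
def gen (k : ℕ) (F : Set (Sym2 (Fin k))) (i : Fin k) : Grp k F :=
  PresentedGroup.of i

/-- The group element corresponding to a symbol: `(i, true)` stands for `gᵢ`,
`(i, false)` stands for `gᵢ⁻¹`. -/
def sym (k : ℕ) (F : Set (Sym2 (Fin k))) (α : Fin k × Bool) : Grp k F :=
  if α.2 then gen k F α.1 else (gen k F α.1)⁻¹

/-- The product of the word `l` of symbols, as an element of the graph group. -/
def wordProd (k : ℕ) (F : Set (Sym2 (Fin k))) (l : List (Fin k × Bool)) : Grp k F :=
  (l.map (sym k F)).prod

/-- `|x|` : the length of a shortest word in the symbols representing `x`. -/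
noncomputable def len {k : ℕ} {F : Set (Sym2 (Fin k))} (x : Grp k F) : ℕ :=
  sInf {n | ∃ l : List (Fin k × Bool), wordProd k F l = x ∧ l.length = n}

/-- The partial order on `G_F`:  `x ≤ y` iff `|y| = |x| + |x⁻¹y|`. -/
def le {k : ℕ} {F : Set (Sym2 (Fin k))} (x y : Grp k F) : Prop :=
  len y = len x + len (x⁻¹ * y)

/-- `m` is the meet `x ∧ y` (greatest lower bound w.r.t. `le`). -/
def IsMeet {k : ℕ} {F : Set (Sym2 (Fin k))} (x y m : Grp k F) : Prop :=
  le m x ∧ le m y ∧ ∀ w, le w x → le w y → le w m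

/-- `j` is the (finite) join `x ∨ y` (least upper bound w.r.t. `le`);
`x ∨ y` is finite iff such a `j` exists. -/
def IsJoin {k : ℕ} {F : Set (Sym2 (Fin k))} (x y j : Grp k F) : Prop :=
  le x j ∧ le y j ∧ ∀ w, le x w → le y w → le j w

/-- `j` is the (finite) join of the set `S`. -/
def IsJoinSet {k : ℕ} {F : Set (Sym2 (Fin k))} (S : Set (Grp k F)) (j : Grp k F) : Prop :=
  (∀ s ∈ S, le s j) ∧ ∀ w, (∀ s ∈ S, le s w) → le j w

/-- `y` is a segment of `a` if `a = x·y·z` for some `x, z`. -/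
def Segment {k : ℕ} {F : Set (Sym2 (Fin k))} (y a : Grp k F) : Prop :=
  ∃ x z, a = x * y * z ∧ len a = len x + len y + len z

/-- The left-invariant metric `dist(x,y) = |x⁻¹y|`. -/
noncomputable def dist {k : ℕ} {F : Set (Sym2 (Fin k))} (x y : Grp k F) : ℕ :=
  len (x⁻¹ * y)

/-- A nonempty set `L` is convex if `x, z ∈ L` and `dist(x,y) + dist(y,z) = dist(x,z)`
imply `y ∈ L`. -/
def ConvexSet {k : ℕ} {F : Set (Sym2 (Fin k))} (L : Set (Grp k F)) : Prop :=
  L.Nonempty ∧ ∀ x z y : Grp k F, x ∈ L → z ∈ L →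
    dist x y + dist y z = dist x z → y ∈ L

/-- An ideal: nonempty, downward closed, and closed under finite joins. -/
def IdealSet {k : ℕ} {F : Set (Sym2 (Fin k))} (I : Set (Grp k F)) : Prop :=
  I.Nonempty ∧ (∀ x ∈ I, ∀ y, le y x → y ∈ I) ∧
    (∀ x ∈ I, ∀ y ∈ I, ∀ j, IsJoin x y j → j ∈ I)

/-- `H` is closed if both `H` and `H⁻¹` are ideals. -/
def ClosedSet {k : ℕ} {F : Set (Sym2 (Fin k))} (H : Set (Grp k F)) : Prop :=
  IdealSet H ∧ IdealSet H⁻¹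

/-- `m` is a minimal element of `S` w.r.t. `le`. -/
def MinimalIn {k : ℕ} {F : Set (Sym2 (Fin k))} (S : Set (Grp k F)) (m : Grp k F) : Prop :=
  m ∈ S ∧ ∀ x ∈ S, le x m → x = m

/-- `l` is a reduced (i.e. shortest) word representing `x`. -/
def MinWord {k : ℕ} {F : Set (Sym2 (Fin k))} (x : Grp k F) (l : List (Fin k × Bool)) : Prop :=
  wordProd k F l = x ∧ l.length = len x

open Classical in
/-- `#_α(x)`: the number of occurrences of the symbol `α` (not counting `α⁻¹`)
in a reduced word representing `x`. -/
noncomputable def symCount {k : ℕ} {F : Set (Sym2 (Fin k))} (α : Fin k × Bool)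
    (x : Grp k F) : ℕ :=
  if h : ∃ l, MinWord x l then h.choose.count α else 0

/-- The symbol `α` occurs in `x`. -/
def Occurs {k : ℕ} {F : Set (Sym2 (Fin k))} (α : Fin k × Bool) (x : Grp k F) : Prop :=
  0 < symCount α x

/-- `α` is a maximal symbol of `x`, i.e. `xα⁻¹ ≤ x`. -/
def MaxSym {k : ℕ} {F : Set (Sym2 (Fin k))} (α : Fin k × Bool) (x : Grp k F) : Prop :=
  le (x * (sym k F α)⁻¹) x

/-- A peak: an element with precisely one maximal symbol. -/
def IsPeak {k : ℕ} {F : Set (Sym2 (Fin k))} (p : Grp k F) : Prop :=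
  ∃! α : Fin k × Bool, MaxSym α p

/-- An `α`-peak: a peak whose unique maximal symbol is `α`. -/
def AlphaPeak {k : ℕ} {F : Set (Sym2 (Fin k))} (α : Fin k × Bool) (p : Grp k F) : Prop :=
  MaxSym α p ∧ ∀ β, MaxSym β p → β = α

/-- The set of generator indices occurring in `b`. -/
def Support {k : ℕ} {F : Set (Sym2 (Fin k))} (b : Grp k F) : Set (Fin k) :=
  {i | Occurs (i, true) b ∨ Occurs (i, false) b}

/-- `b` is connected: the generators occurring in `b` induce a connected subgraph of
the graph `([k], F)`. -/
def Conn {k : ℕ} {F : Set (Sym2 (Fin k))} (b : Grp k F) : Prop :=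
  (SimpleGraph.induce (Support b) (SimpleGraph.fromEdgeSet F)).Connected

/-- `b` is cyclically reduced: `b ∧ b⁻¹ = 1`. -/
def CycRed {k : ℕ} {F : Set (Sym2 (Fin k))} (b : Grp k F) : Prop :=
  IsMeet b b⁻¹ 1

section Bounds

variable {α : Type*} [Preorder α] {a b c : α}

lemma mem_upperBounds_pair {w : α} : w ∈ upperBounds {a, b} ↔ a ≤ w ∧ b ≤ w := by
  simp

lemma mem_lowerBounds_pair {w : α} : w ∈ lowerBounds {a, b} ↔ w ≤ a ∧ w ≤ b := by
  simp

lemma bddAbove_pair_iff : BddAbove ({a, b} : Set α) ↔ ∃ w, a ≤ w ∧ b ≤ w := by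
  simp [bddAbove_def]

lemma bddAbove_triple_iff :
    BddAbove ({a, b, c} : Set α) ↔ ∃ w, a ≤ w ∧ b ≤ w ∧ c ≤ w := by
  simp [bddAbove_def]

end Bounds

section Words

variable {k : ℕ} {F : Set (Sym2 (Fin k))}

@[simp] lemma wordProd_nil : wordProd k F [] = 1 := rfl

@[simp] lemma wordProd_append (l₁ l₂ : List (Fin k × Bool)) :
    wordProd k F (l₁ ++ l₂) = wordProd k F l₁ * wordProd k F l₂ := by
  simp [wordProd]

@[simp] lemma wordProd_cons (α : Fin k × Bool) (l : List (Fin k × Bool)) :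
    wordProd k F (α :: l) = sym k F α * wordProd k F l := by
  simp [wordProd]

@[simp] lemma wordProd_singleton (α : Fin k × Bool) : wordProd k F [α] = sym k F α := by
  simp [wordProd]

lemma inv_sym (α : Fin k × Bool) : (sym k F α)⁻¹ = sym k F (α.1, !α.2) := by
  obtain ⟨i, _ | _⟩ := α <;> simp [sym]

lemma exists_wordProd_eq (x : Grp k F) : ∃ l, wordProd k F l = x := by
  induction x using PresentedGroup.induction_on with
  | _ g =>
  induction g using FreeGroup.induction_on with
  | C1 => exact ⟨[], rfl⟩
  | of i => exact ⟨[(i, true)], by simp [sym, gen]; rfl⟩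
  | inv_of i _ => exact ⟨[(i, false)], by simp [sym, gen]; rfl⟩
  | mul a b ha hb =>
    obtain ⟨la, hla⟩ := ha
    obtain ⟨lb, hlb⟩ := hb
    exact ⟨la ++ lb, by rw [wordProd_append, hla, hlb, map_mul]⟩

lemma exists_minWord (x : Grp k F) : ∃ l, MinWord x l := by
  obtain ⟨l, hl⟩ := exists_wordProd_eq x
  have hne : {n | ∃ l : List (Fin k × Bool), wordProd k F l = x ∧ l.length = n}.Nonempty :=
    ⟨l.length, l, hl, rfl⟩
  exact Nat.sInf_mem hne

lemma len_le_length {l : List (Fin k × Bool)} {x : Grp k F} (h : wordProd k F l = x) :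
    len x ≤ l.length :=
  Nat.sInf_le ⟨l, h, rfl⟩

@[simp] lemma len_eq_zero {x : Grp k F} : len x = 0 ↔ x = 1 := by
  refine ⟨fun h => ?_, fun h => Nat.le_zero.mp (len_le_length (l := []) h.symm)⟩
  obtain ⟨l, hl, hlen⟩ := exists_minWord x
  rw [h, List.length_eq_zero_iff] at hlen
  rw [← hl, hlen, wordProd_nil]

lemma len_mul_le (x y : Grp k F) : len (x * y) ≤ len x + len y := by
  obtain ⟨lx, hx, hlx⟩ := exists_minWord x
  obtain ⟨ly, hy, hly⟩ := exists_minWord y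
  simpa [hlx, hly] using len_le_length (l := lx ++ ly) (by rw [wordProd_append, hx, hy])

lemma len_le_len_add_len_inv_mul (x y : Grp k F) : len y ≤ len x + len (x⁻¹ * y) := by
  simpa using len_mul_le x (x⁻¹ * y)

lemma wordProd_reverse_map_inv (l : List (Fin k × Bool)) :
    wordProd k F (l.map fun α => (α.1, !α.2)).reverse = (wordProd k F l)⁻¹ := by
  induction l with
  | nil => simp
  | cons α l ih => simp [ih, inv_sym]

@[simp] lemma len_inv (x : Grp k F) : len x⁻¹ = len x := by
  suffices h : ∀ x : Grp k F, len x⁻¹ ≤ len x from le_antisymm (h x) (by simpa using h x⁻¹)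
  intro x
  obtain ⟨l, hl, hlen⟩ := exists_minWord x
  have h := len_le_length (x := x⁻¹) (by rw [wordProd_reverse_map_inv l, hl])
  rwa [List.length_reverse, List.length_map, hlen] at h

/-- The concurrency relation of the heaps of `G_F`: letters at vertices that are not concurrent
commute. -/
def Concurrent (F : Set (Sym2 (Fin k))) (i j : Fin k) : Prop := i = j ∨ s(i, j) ∈ F

lemma Concurrent.symm {i j : Fin k} (h : Concurrent F i j) : Concurrent F j i := by
  rcases h with rfl | h
  · exact Or.inl rfl
  · exact Or.inr (Sym2.eq_swap ▸ h)

lemma sym_commute {α β : Fin k × Bool} (h : ¬ Concurrent F α.1 β.1) :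
    Commute (sym k F α) (sym k F β) := by
  have hgen : Commute (gen k F α.1) (gen k F β.1) := by
    have hrel : PresentedGroup.mk (Rels k F) (FreeGroup.of α.1 * FreeGroup.of β.1 *
        (FreeGroup.of α.1)⁻¹ * (FreeGroup.of β.1)⁻¹) = 1 :=
      (QuotientGroup.eq_one_iff _).mpr <| Subgroup.subset_normalClosure
        ⟨α.1, β.1, fun h' => h (Or.inl h'), fun h' => h (Or.inr h'), rfl⟩
    simp only [map_mul, map_inv, mul_inv_eq_iff_eq_mul] at hrel
    exact hrel
  obtain ⟨i, _ | _⟩ := α <;> obtain ⟨j, _ | _⟩ := β <;> simp only [sym] at hgen ⊢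
  · exact hgen.inv_left.inv_right
  · exact hgen.inv_left
  · exact hgen.inv_right
  · exact hgen

end Words

section Pilings

variable {k : ℕ} {F : Set (Sym2 (Fin k))}

/-- Stack `i` lists, from the top down, a bead `some b` for each letter `(i, b)` and a bead
`none` for each letter at a neighbour of `i` in `F`. -/
abbrev Piling (k : ℕ) := Fin k → List (Option Bool)

def cancels (P : Piling k) (α : Fin k × Bool) : Prop :=
  (P α.1).head? = some (some !α.2)

open Classical in
noncomputable def push (F : Set (Sym2 (Fin k))) (P : Piling k) (α : Fin k × Bool) :
    Piling k := fun j =>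
  if Concurrent F α.1 j then
    if cancels P α then (P j).tail else (if j = α.1 then some α.2 else none) :: P j
  else P j

open Classical in
lemma push_apply (P : Piling k) (α : Fin k × Bool) (j : Fin k) : push F P α j =
    if Concurrent F α.1 j then
      if cancels P α then (P j).tail else (if j = α.1 then some α.2 else none) :: P j
    else P j :=
  rfl

open Classical in
lemma push_self (P : Piling k) (α : Fin k × Bool) :
    push F P α α.1 = if cancels P α then (P α.1).tail else some α.2 :: P α.1 := by
  simp [push_apply, Concurrent]

lemma push_of_not_concurrent {P : Piling k} {α : Fin k × Bool} {j : Fin k}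
    (h : ¬ Concurrent F α.1 j) : push F P α j = P j := by
  simp [push, h]

lemma cancels_push_iff {P : Piling k} {α β : Fin k × Bool} (h : ¬ Concurrent F α.1 β.1) :
    cancels (push F P α) β ↔ cancels P β := by
  rw [cancels, cancels, push_of_not_concurrent h]

structure Admissible (F : Set (Sym2 (Fin k))) (P : Piling k) : Prop where
  isChain : ∀ i, (P i).IsChain fun u v => ∀ b, u = some b → v ≠ some !b
  head_eq_none : ∀ i b j, (P i).head? = some (some b) → j ≠ i → Concurrent F i j →
    (P j).head? = some none

lemma admissible_empty : Admissible F (fun _ => [] : Piling k) :=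
  ⟨fun _ => List.IsChain.nil, fun _ _ _ h => by simp at h⟩

lemma Admissible.push {P : Piling k} {α : Fin k × Bool} (hP : Admissible F P)
    (hc : ¬ cancels P α) : Admissible F (push F P α) := by
  constructor
  · intro j
    by_cases hj : Concurrent F α.1 j
    · simp only [push_apply, hj, hc, if_true, if_false, List.isChain_cons]
      refine ⟨?_, hP.isChain j⟩
      split_ifs with h
      · subst h
        rintro y hy b hb rfl
        obtain rfl := Option.some_injective _ hb
        exact hc (by simpa [cancels] using hy)
      · simp
    · rw [push_of_not_concurrent hj]; exact hP.isChain j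
  · intro i b j hi hji hij
    by_cases hj : Concurrent F α.1 j
    · have : j ≠ α.1 := by
        rintro rfl
        by_cases hi' : Concurrent F α.1 i
        · simp [push_apply, hi', hc, hji.symm] at hi
        · exact hi' hij.symm
      simp [push_apply, hj, hc, this]
    · by_cases hi' : Concurrent F α.1 i
      · have : i = α.1 := by
          by_contra hne; simp [push_apply, hi', hc, hne] at hi
        subst this
        exact absurd hij hj
      · rw [push_of_not_concurrent hi'] at hi
        rw [push_of_not_concurrent hj]
        exact hP.head_eq_none i b j hi hji hij

lemma push_push_inv {P : Piling k} {α : Fin k × Bool} (hP : Admissible F P) :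
    push F (push F P α) (α.1, !α.2) = P := by
  classical
  funext j
  by_cases hj : Concurrent F α.1 j
  swap
  · simp only [push_apply, hj, if_false]
  by_cases hc : cancels P α
  · have hc' : ¬ cancels (push F P α) (α.1, !α.2) := by
      have hchain := hP.isChain α.1
      rw [← List.cons_head?_tail hc, List.isChain_cons] at hchain
      change ¬ (push F P α α.1).head? = _
      rw [push_self, if_pos hc, Bool.not_not]
      exact fun h => hchain.1 _ (by simp [h]) _ rfl rfl
    simp only [push_apply, hj, hc, hc', if_true, if_false]
    split_ifs with h
    · subst h; exact List.cons_head?_tail hc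
    · exact List.cons_head?_tail (hP.head_eq_none _ _ j hc h hj)
  · have hc' : cancels (push F P α) (α.1, !α.2) := by
      change (push F P α α.1).head? = _
      rw [push_self, if_neg hc, Bool.not_not]
      rfl
    simp [push_apply, hj, hc, hc']

lemma push_comm {P : Piling k} {α β : Fin k × Bool} (hP : Admissible F P)
    (h : ¬ Concurrent F α.1 β.1) : push F (push F P α) β = push F (push F P β) α := by
  classical
  funext m
  have hα : cancels (push F P β) α ↔ cancels P α := cancels_push_iff fun h' => h h'.symm
  have hβ : cancels (push F P α) β ↔ cancels P β := cancels_push_iff h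
  by_cases hαm : Concurrent F α.1 m <;> by_cases hβm : Concurrent F β.1 m
  · have hmα : m ≠ α.1 := by rintro rfl; exact h hβm.symm
    have hmβ : m ≠ β.1 := by rintro rfl; exact h hαm
    simp only [push_apply, hαm, hβm, hα, hβ, hmα, hmβ, if_true, if_false]
    by_cases cα : cancels P α <;> by_cases cβ : cancels P β <;>
      simp only [cα, cβ, if_true, if_false, List.tail_cons]
    · exact List.cons_head?_tail (hP.head_eq_none _ _ m cα hmα hαm)
    · exact (List.cons_head?_tail (hP.head_eq_none _ _ m cβ hmβ hβm)).symm
  all_goals simp [push_apply, hαm, hβm, hα, hβ]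

end Pilings

section Heaps

variable {k : ℕ} {F : Set (Sym2 (Fin k))}

noncomputable def heap (F : Set (Sym2 (Fin k))) (l : List (Fin k × Bool)) : Piling k :=
  l.foldl (push F) fun _ => []

@[simp] lemma heap_nil : heap F [] = fun _ => [] := rfl

@[simp] lemma heap_append_singleton (l : List (Fin k × Bool)) (α : Fin k × Bool) :
    heap F (l ++ [α]) = push F (heap F l) α := by
  simp [heap]

inductive CancelFree (F : Set (Sym2 (Fin k))) : List (Fin k × Bool) → Prop
  | nil : CancelFree F []
  | snoc {l : List (Fin k × Bool)} {α : Fin k × Bool} :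
      CancelFree F l → ¬ cancels (heap F l) α → CancelFree F (l ++ [α])

lemma CancelFree.admissible {l : List (Fin k × Bool)} (hl : CancelFree F l) :
    Admissible F (heap F l) := by
  induction hl with
  | nil => exact admissible_empty
  | snoc _ hα ih => simpa using ih.push hα

noncomputable def beadCount (P : Piling k) : ℕ := ∑ i, (P i).countP Option.isSome

lemma beadCount_push {P : Piling k} {α : Fin k × Bool} (hc : ¬ cancels P α) :
    beadCount (push F P α) = beadCount P + 1 := by
  have key : ∀ j, (push F P α j).countP Option.isSome =
      (P j).countP Option.isSome + if j = α.1 then 1 else 0 := by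
    intro j
    by_cases hj : Concurrent F α.1 j
    · rw [push_apply, if_pos hj, if_neg hc]
      by_cases h : j = α.1 <;> simp [h]
    · have : j ≠ α.1 := fun h => hj (Or.inl h.symm)
      simp [push_of_not_concurrent hj, this]
  simp [beadCount, key, Finset.sum_add_distrib]

lemma CancelFree.beadCount_heap {l : List (Fin k × Bool)} (hl : CancelFree F l) :
    beadCount (heap F l) = l.length := by
  induction hl with
  | nil => simp [beadCount]
  | snoc _ hα ih => simp [beadCount_push hα, ih]

/-- The bead cancelled by `α` was pushed by a letter of `l` inverse to `α` that commutes with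
all later letters of `l`; `l'` is `l` without that letter. -/
lemma CancelFree.exists_of_cancels {l : List (Fin k × Bool)} (hl : CancelFree F l)
    {α : Fin k × Bool} (hc : cancels (heap F l) α) :
    ∃ l', CancelFree F l' ∧ l'.length + 1 = l.length ∧
      wordProd k F l' = wordProd k F l * sym k F α ∧ heap F l' = push F (heap F l) α := by
  induction hl generalizing α with
  | nil => simp [cancels] at hc
  | @snoc l β hl hβ ih =>
    rw [heap_append_singleton] at hc ⊢
    have hP := hl.admissible
    have htop : (push F (heap F l) β β.1).head? = some (some β.2) := by
      rw [push_self, if_neg hβ]; rfl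
    by_cases hαβ : α.1 = β.1
    · obtain rfl : α = (β.1, !β.2) := by
        have h := hc
        change (push F (heap F l) β α.1).head? = _ at h
        rw [hαβ, htop] at h
        simp only [Option.some.injEq] at h
        exact Prod.ext hαβ (by simp [h])
      refine ⟨l, hl, by simp, ?_, (push_push_inv hP).symm⟩
      rw [wordProd_append, wordProd_singleton, mul_assoc, ← inv_sym, mul_inv_cancel, mul_one]
    · have hcon : ¬ Concurrent F β.1 α.1 := by
        rintro (h | h)
        · exact hαβ h.symm
        · have h' := (hP.push hβ).head_eq_none β.1 β.2 α.1 htop hαβ (Or.inr h)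
          change (push F (heap F l) β α.1).head? = _ at hc
          rw [h'] at hc
          simp at hc
      obtain ⟨l', hl', hlen, hprod, hheap⟩ := ih ((cancels_push_iff hcon).1 hc)
      refine ⟨l' ++ [β], hl'.snoc ?_, by simp [hlen], ?_, ?_⟩
      · rwa [hheap, cancels_push_iff fun h => hcon h.symm]
      · simp only [wordProd_append, wordProd_singleton, hprod, mul_assoc,
          (sym_commute fun h => hcon h.symm).eq]
      · rw [heap_append_singleton, hheap, push_comm hP fun h => hcon h.symm]

def reach (F : Set (Sym2 (Fin k))) : Set (Piling k) := {P | ∃ l, CancelFree F l ∧ heap F l = P}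

lemma admissible_of_mem_reach {P : Piling k} (hP : P ∈ reach F) : Admissible F P := by
  obtain ⟨l, hl, rfl⟩ := hP
  exact hl.admissible

lemma push_mem_reach {P : Piling k} (hP : P ∈ reach F) (α : Fin k × Bool) :
    push F P α ∈ reach F := by
  obtain ⟨l, hl, rfl⟩ := hP
  by_cases hc : cancels (heap F l) α
  · obtain ⟨l', hl', -, -, h⟩ := hl.exists_of_cancels hc
    exact ⟨l', hl', h⟩
  · exact ⟨l ++ [α], hl.snoc hc, heap_append_singleton l α⟩

noncomputable def pushPerm (F : Set (Sym2 (Fin k))) (α : Fin k × Bool) :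
    Equiv.Perm (reach F) where
  toFun P := ⟨push F P α, push_mem_reach P.2 α⟩
  invFun P := ⟨push F P (α.1, !α.2), push_mem_reach P.2 _⟩
  left_inv P := Subtype.ext (push_push_inv (admissible_of_mem_reach P.2))
  right_inv P := Subtype.ext <| by
    simpa using push_push_inv (α := (α.1, !α.2)) (admissible_of_mem_reach P.2)

noncomputable def toPerm : Grp k F →* Equiv.Perm (reach F) :=
  PresentedGroup.toGroup (f := fun i => pushPerm F (i, false)) <| by
    rintro r ⟨i, j, hij, hF, rfl⟩
    have hcomm : pushPerm F (i, false) * pushPerm F (j, false) =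
        pushPerm F (j, false) * pushPerm F (i, false) :=
      Equiv.ext fun P => Subtype.ext <|
        (push_comm (admissible_of_mem_reach P.2) (not_or.2 ⟨hij, hF⟩)).symm
    simp [hcomm]

/-- Inverting `x` turns the left action `toPerm` into a right action, see `pilingOf_mul_sym`. -/
noncomputable def pilingOf (x : Grp k F) : Piling k :=
  (toPerm x⁻¹ ⟨fun _ => [], [], .nil, rfl⟩).1

lemma pilingOf_mul_sym (x : Grp k F) (α : Fin k × Bool) :
    pilingOf (x * sym k F α) = push F (pilingOf x) α := by
  obtain ⟨i, _ | _⟩ := α <;>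
    simp [pilingOf, sym, gen, toPerm, pushPerm, Equiv.Perm.inv_def]

lemma pilingOf_wordProd (l : List (Fin k × Bool)) : pilingOf (wordProd k F l) = heap F l := by
  induction l using List.reverseRecOn with
  | nil => simp [pilingOf]
  | append_singleton l α ih => simp [pilingOf_mul_sym, ih]

end Heaps

section Length

variable {k : ℕ} {F : Set (Sym2 (Fin k))}

lemma cancelFree_of_minWord {x : Grp k F} {l : List (Fin k × Bool)} (h : MinWord x l) :
    CancelFree F l := by
  induction l using List.reverseRecOn generalizing x with
  | nil => exact .nil
  | append_singleton l α ih =>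
    obtain ⟨rfl, hlen⟩ := h
    have hl : MinWord (wordProd k F l) l := by
      refine ⟨rfl, le_antisymm ?_ (len_le_length rfl)⟩
      have h1 := len_mul_le (wordProd k F l) (sym k F α)
      have h2 := len_le_length (l := [α]) (wordProd_singleton (F := F) α)
      simp only [wordProd_append, wordProd_singleton, List.length_append,
        List.length_singleton] at hlen h1 h2
      omega
    refine (ih hl).snoc fun hc => ?_
    obtain ⟨l', -, hlen', hprod, -⟩ := (ih hl).exists_of_cancels hc
    have := len_le_length (x := wordProd k F (l ++ [α])) (hprod.trans (by simp))
    simp only [List.length_append, List.length_singleton] at hlen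
    omega

lemma len_wordProd_of_cancelFree {l : List (Fin k × Bool)} (hl : CancelFree F l) :
    len (wordProd k F l) = l.length := by
  obtain ⟨l', hl'⟩ := exists_minWord (wordProd k F l)
  have h := congrArg beadCount
    ((pilingOf_wordProd l').symm.trans (hl'.1 ▸ pilingOf_wordProd l))
  rwa [(cancelFree_of_minWord hl').beadCount_heap, hl.beadCount_heap, hl'.2] at h

@[simp] lemma len_sym (α : Fin k × Bool) : len (sym k F α) = 1 := by
  simpa using len_wordProd_of_cancelFree (CancelFree.nil.snoc (F := F) (α := α) (by
    simp [cancels]))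

lemma len_mul_sym_of_not_cancels {x : Grp k F} {α : Fin k × Bool}
    (h : ¬ cancels (pilingOf x) α) : len (x * sym k F α) = len x + 1 := by
  obtain ⟨l, hl⟩ := exists_minWord x
  rw [← hl.1, pilingOf_wordProd] at h
  have := len_wordProd_of_cancelFree ((cancelFree_of_minWord hl).snoc h)
  rwa [wordProd_append, wordProd_singleton, hl.1, List.length_append, hl.2,
    List.length_singleton] at this

lemma len_mul_sym_of_cancels {x : Grp k F} {α : Fin k × Bool}
    (h : cancels (pilingOf x) α) : len (x * sym k F α) + 1 = len x := by
  obtain ⟨l, hl⟩ := exists_minWord x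
  rw [← hl.1, pilingOf_wordProd] at h
  obtain ⟨l', -, hlen, hprod, -⟩ := (cancelFree_of_minWord hl).exists_of_cancels h
  have h1 : len (x * sym k F α) ≤ l'.length := len_le_length (hprod.trans (by rw [hl.1]))
  have h2 : len x ≤ len (x * sym k F α) + 1 := by
    simpa using len_mul_le (x * sym k F α) (sym k F α)⁻¹
  have := hl.2
  omega

end Length

section Order

variable {k : ℕ} {F : Set (Sym2 (Fin k))}

instance : PartialOrder (Grp k F) where
  le := le
  le_refl x := by simp [le]
  le_trans x y z hxy hyz := by
    have h1 := len_mul_le (x⁻¹ * y) (y⁻¹ * z)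
    have h2 := len_le_len_add_len_inv_mul x z
    simp only [le, mul_assoc, mul_inv_cancel_left] at *
    omega
  le_antisymm x y hxy hyx := by
    have : len (x⁻¹ * y) = 0 := by unfold le at hxy hyx; omega
    exact inv_mul_eq_one.1 (len_eq_zero.1 this)

variable {u v w x y : Grp k F}

lemma le_iff_len : x ≤ y ↔ len y = len x + len (x⁻¹ * y) := Iff.rfl

lemma one_le (x : Grp k F) : 1 ≤ x := by simp [le_iff_len]

lemma eq_of_le_of_len_le (h : x ≤ y) (hl : len y ≤ len x) : x = y := by
  rw [le_iff_len] at h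
  exact inv_mul_eq_one.1 (len_eq_zero.1 (by omega))

lemma len_mul_of_le_inv_mul (hu : u ≤ x) (hv : v ≤ u⁻¹ * x) :
    len (u * v) = len u + len v ∧ len x = len (u * v) + len ((u * v)⁻¹ * x) := by
  have h1 := len_mul_le u v
  have h2 := len_le_len_add_len_inv_mul (u * v) x
  rw [le_iff_len] at hu hv
  rw [mul_inv_rev, mul_assoc] at h2 ⊢
  omega

lemma le_mul_of_le_inv_mul (hu : u ≤ x) (hv : v ≤ u⁻¹ * x) : u ≤ u * v := by
  rw [le_iff_len, inv_mul_cancel_left]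
  exact (len_mul_of_le_inv_mul hu hv).1

lemma mul_le_of_le_inv_mul (hu : u ≤ x) (hv : v ≤ u⁻¹ * x) : u * v ≤ x :=
  (len_mul_of_le_inv_mul hu hv).2

lemma inv_mul_le_inv_mul_iff (hw : u ≤ w) (hx : u ≤ x) : u⁻¹ * w ≤ u⁻¹ * x ↔ w ≤ x := by
  rw [le_iff_len] at hw hx
  rw [le_iff_len, le_iff_len, mul_inv_rev, inv_inv, mul_assoc, mul_inv_cancel_left]
  omega

lemma mul_le_mul_iff_of_le_mul (hv : u ≤ u * v) (hw : u ≤ u * w) : u * v ≤ u * w ↔ v ≤ w := by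
  simpa using (inv_mul_le_inv_mul_iff hv hw).symm

end Order

section Letters

variable {k : ℕ} {F : Set (Sym2 (Fin k))} {A B : Fin k × Bool} {x : Grp k F}

lemma sym_le_iff_len : sym k F A ≤ x ↔ len ((sym k F A)⁻¹ * x) + 1 = len x := by
  rw [le_iff_len, len_sym]; omega

lemma exists_sym_le (hx : x ≠ 1) : ∃ A, sym k F A ≤ x := by
  obtain ⟨_ | ⟨A, l⟩, hl, hlen⟩ := exists_minWord x
  · exact absurd hl.symm hx
  refine ⟨A, sym_le_iff_len.2 (le_antisymm ?_ ?_)⟩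
  · have := len_le_length (x := (sym k F A)⁻¹ * x) (l := l) (by rw [← hl]; simp)
    simp only [List.length_cons] at hlen
    omega
  · have := len_le_len_add_len_inv_mul (sym k F A) x
    rw [len_sym] at this
    omega

lemma admissible_pilingOf (x : Grp k F) : Admissible F (pilingOf x) :=
  admissible_of_mem_reach (toPerm x⁻¹ _).2

lemma sym_le_iff_cancels : sym k F A ≤ x ↔ cancels (pilingOf x⁻¹) A := by
  have h : len ((sym k F A)⁻¹ * x) = len (x⁻¹ * sym k F A) := by
    rw [← len_inv, mul_inv_rev, inv_inv]
  rw [sym_le_iff_len, h]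
  by_cases hc : cancels (pilingOf x⁻¹) A
  · simpa [hc] using len_mul_sym_of_cancels hc
  · simp only [hc, len_mul_sym_of_not_cancels hc, len_inv, iff_false]
    omega

lemma len_inv_sym_mul_of_not_sym_le (h : ¬ sym k F A ≤ x) :
    len ((sym k F A)⁻¹ * x) = len x + 1 := by
  rw [sym_le_iff_cancels] at h
  rw [← len_inv, mul_inv_rev, inv_inv, len_mul_sym_of_not_cancels h, len_inv]

lemma sym_le_sym_mul_iff : sym k F A ≤ sym k F A * x ↔ ¬ sym k F (A.1, !A.2) ≤ x := by
  have hinv : (sym k F (A.1, !A.2))⁻¹ = sym k F A := by simp [inv_sym]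
  rw [le_iff_len, inv_mul_cancel_left, len_sym]
  by_cases h : sym k F (A.1, !A.2) ≤ x
  · have h' := sym_le_iff_len.1 h
    rw [hinv] at h'
    simp only [h, not_true_eq_false, iff_false]
    omega
  · have := len_inv_sym_mul_of_not_sym_le h
    rw [hinv] at this
    simp only [h, not_false_eq_true, iff_true, this]
    omega

lemma not_concurrent_of_sym_le (hA : sym k F A ≤ x) (hB : sym k F B ≤ x) (hAB : A ≠ B) :
    ¬ Concurrent F A.1 B.1 := by
  rw [sym_le_iff_cancels] at hA hB
  have heq : A.1 = B.1 → False := fun h => hAB <| Prod.ext h <| by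
    rw [cancels, h, hB] at hA
    simpa using hA.symm
  rintro (h | h)
  · exact heq h
  · have := (admissible_pilingOf x⁻¹).head_eq_none A.1 _ B.1 hA (fun h' => heq h'.symm)
      (Or.inr h)
    rw [cancels, this] at hB
    simp at hB

lemma sym_le_inv_sym_mul_iff (h : ¬ Concurrent F B.1 A.1) :
    sym k F A ≤ (sym k F B)⁻¹ * x ↔ sym k F A ≤ x := by
  rw [sym_le_iff_cancels, sym_le_iff_cancels, mul_inv_rev, inv_inv, pilingOf_mul_sym,
    cancels_push_iff h]

end Letters

section Lattice

variable {k : ℕ} {F : Set (Sym2 (Fin k))} {A B : Fin k × Bool} {s w x y : Grp k F}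

lemma commute_sym_of_not_sym_le (hA : sym k F A ≤ x) (hw : w ≤ x) (hAw : ¬ sym k F A ≤ w) :
    Commute (sym k F A) w ∧ w ≤ w * sym k F A ∧ w * sym k F A ≤ x := by
  induction hn : len w using Nat.strong_induction_on generalizing w x with
  | _ n ih =>
  obtain rfl | hw1 := eq_or_ne w 1
  · simpa [one_le] using hA
  obtain ⟨B, hB⟩ := exists_sym_le hw1
  obtain ⟨v, rfl⟩ : ∃ v, w = sym k F B * v := ⟨_, (mul_inv_cancel_left _ _).symm⟩
  have hBx : sym k F B ≤ x := hB.trans hw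
  have hcon : ¬ Concurrent F B.1 A.1 :=
    not_concurrent_of_sym_le hBx hA fun h => hAw (h ▸ hB)
  have hlen : len (sym k F B * v) = len v + 1 := by
    simpa using (sym_le_iff_len.1 hB).symm
  obtain ⟨hcomm, hle, hmul⟩ := ih (len v) (by omega) ((sym_le_inv_sym_mul_iff hcon).2 hA)
    (by simpa using (inv_mul_le_inv_mul_iff hB hBx).2 hw)
    (fun h => hAw ((sym_le_inv_sym_mul_iff hcon).1 (by simpa using h))) rfl
  refine ⟨(sym_commute fun h => hcon h.symm).mul_right hcomm, ?_, ?_⟩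
  · have h1 := (len_mul_of_le_inv_mul hBx hmul).1
    rw [le_iff_len, inv_mul_cancel_left, len_sym] at hle
    rw [le_iff_len, inv_mul_cancel_left, len_sym, mul_assoc, h1, len_sym, hle, hlen]
    omega
  · simpa only [mul_assoc] using mul_le_of_le_inv_mul hBx hmul

lemma sym_le_sym_mul_of_commute (hcomm : Commute (sym k F A) x) (h : x ≤ x * sym k F A) :
    sym k F A ≤ sym k F A * x := by
  rw [le_iff_len, inv_mul_cancel_left, len_sym, hcomm.eq]
  rw [le_iff_len, inv_mul_cancel_left, len_sym] at h
  omega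

lemma le_inv_sym_mul_of_not_sym_le (hB : sym k F B ≤ x) (hs : s ≤ x)
    (hBs : ¬ sym k F B ≤ s) : s ≤ (sym k F B)⁻¹ * x := by
  obtain ⟨hcomm, hle, hmul⟩ := commute_sym_of_not_sym_le hB hs hBs
  have hBs' := sym_le_sym_mul_of_commute hcomm hle
  simpa using (inv_mul_le_inv_mul_iff hBs' hB).2 (hcomm.eq ▸ hmul)

open Classical in
noncomputable def stripSym (A : Fin k × Bool) (x : Grp k F) : Grp k F :=
  if sym k F A ≤ x then (sym k F A)⁻¹ * x else x

lemma stripSym_of_sym_le (h : sym k F A ≤ x) : stripSym A x = (sym k F A)⁻¹ * x := if_pos h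

lemma stripSym_of_not_sym_le (h : ¬ sym k F A ≤ x) : stripSym A x = x := if_neg h

lemma stripSym_mono (h : x ≤ y) : stripSym A x ≤ stripSym A y := by
  by_cases hx : sym k F A ≤ x
  · rw [stripSym_of_sym_le hx, stripSym_of_sym_le (hx.trans h)]
    exact (inv_mul_le_inv_mul_iff hx (hx.trans h)).2 h
  by_cases hy : sym k F A ≤ y
  · rw [stripSym_of_not_sym_le hx, stripSym_of_sym_le hy]
    exact le_inv_sym_mul_of_not_sym_le hy h hx
  · rwa [stripSym_of_not_sym_le hx, stripSym_of_not_sym_le hy]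

lemma le_sym_mul_stripSym (hA : sym k F A ≤ y) (hx : x ≤ y) :
    sym k F A ≤ sym k F A * stripSym A x ∧ x ≤ sym k F A * stripSym A x := by
  by_cases h : sym k F A ≤ x
  · simp [stripSym_of_sym_le h, h]
  · obtain ⟨hcomm, hle, -⟩ := commute_sym_of_not_sym_le hA hx h
    rw [stripSym_of_not_sym_le h]
    exact ⟨sym_le_sym_mul_of_commute hcomm hle, hcomm.eq ▸ hle⟩

lemma bddAbove_image_sym_mul {S : Set (Grp k F)} (hS : BddAbove S)
    (h : ∀ s ∈ S, sym k F A ≤ sym k F A * s) : BddAbove ((sym k F A * ·) '' S) := by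
  obtain ⟨w, hw⟩ := hS
  induction hn : len w using Nat.strong_induction_on generalizing w with
  | _ n ih =>
  by_cases hw' : sym k F (A.1, !A.2) ≤ w
  · have := sym_le_iff_len.1 hw'
    exact ih _ (by omega) _ (fun s hs =>
      le_inv_sym_mul_of_not_sym_le hw' (hw hs) (sym_le_sym_mul_iff.1 (h s hs))) rfl
  · refine ⟨sym k F A * w, ?_⟩
    rintro _ ⟨s, hs, rfl⟩
    exact (mul_le_mul_iff_of_le_mul (h s hs) (sym_le_sym_mul_iff.2 hw')).2 (hw hs)

theorem bddAbove_triple {a b c : Grp k F} (hab : BddAbove {a, b}) (hac : BddAbove {a, c})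
    (hbc : BddAbove {b, c}) : BddAbove {a, b, c} := by
  induction hn : len a using Nat.strong_induction_on generalizing a b c with
  | _ n ih =>
  obtain rfl | ha := eq_or_ne a 1
  · obtain ⟨w, hb, hc⟩ := bddAbove_pair_iff.1 hbc
    exact bddAbove_triple_iff.2 ⟨w, one_le w, hb, hc⟩
  obtain ⟨A, hA⟩ := exists_sym_le ha
  have hstrip : ∀ {x y : Grp k F}, BddAbove {x, y} → BddAbove {stripSym A x, stripSym A y} :=
    fun h => let ⟨w, hx, hy⟩ := bddAbove_pair_iff.1 h
      bddAbove_pair_iff.2 ⟨stripSym A w, stripSym_mono hx, stripSym_mono hy⟩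
  have hlt : len (stripSym A a) < n := by
    have := sym_le_iff_len.1 hA
    rw [stripSym_of_sym_le hA]
    omega
  obtain ⟨wab, haw, hbw⟩ := bddAbove_pair_iff.1 hab
  obtain ⟨wac, haw', hcw⟩ := bddAbove_pair_iff.1 hac
  obtain ⟨ha₁, ha₂⟩ := le_sym_mul_stripSym hA le_rfl
  obtain ⟨hb₁, hb₂⟩ := le_sym_mul_stripSym (hA.trans haw) hbw
  obtain ⟨hc₁, hc₂⟩ := le_sym_mul_stripSym (hA.trans haw') hcw
  have h := bddAbove_image_sym_mul (A := A)
    (ih _ hlt (hstrip hab) (hstrip hac) (hstrip hbc) rfl) (by simp [ha₁, hb₁, hc₁])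
  rw [Set.image_insert_eq, Set.image_insert_eq, Set.image_singleton] at h
  obtain ⟨w, h₁, h₂, h₃⟩ := bddAbove_triple_iff.1 h
  exact bddAbove_triple_iff.2 ⟨w, ha₂.trans h₁, hb₂.trans h₂, hc₂.trans h₃⟩

end Lattice

section Joins

variable {k : ℕ} {F : Set (Sym2 (Fin k))}

theorem exists_isGLB_pair (x y : Grp k F) : ∃ m, IsGLB {x, y} m := by
  induction hn : len x using Nat.strong_induction_on generalizing x y with
  | _ n ih =>
  by_cases hc : ∃ A, sym k F A ≤ x ∧ sym k F A ≤ y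
  · obtain ⟨A, hAx, hAy⟩ := hc
    have := sym_le_iff_len.1 hAx
    obtain ⟨m, hm⟩ := ih _ (by omega) ((sym k F A)⁻¹ * x) ((sym k F A)⁻¹ * y) rfl
    obtain ⟨hmx, hmy⟩ := mem_lowerBounds_pair.1 hm.1
    refine ⟨sym k F A * m, mem_lowerBounds_pair.2
      ⟨mul_le_of_le_inv_mul hAx hmx, mul_le_of_le_inv_mul hAy hmy⟩, fun w hw => ?_⟩
    obtain ⟨hwx, hwy⟩ := mem_lowerBounds_pair.1 hw
    have hwm : stripSym A w ≤ m := hm.2 <| mem_lowerBounds_pair.2 ⟨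
      stripSym_of_sym_le hAx ▸ stripSym_mono hwx, stripSym_of_sym_le hAy ▸ stripSym_mono hwy⟩
    obtain ⟨hA, hw'⟩ := le_sym_mul_stripSym hAx hwx
    exact hw'.trans ((mul_le_mul_iff_of_le_mul hA (le_mul_of_le_inv_mul hAx hmx)).2 hwm)
  · refine ⟨1, mem_lowerBounds_pair.2 ⟨one_le x, one_le y⟩, fun w hw => ?_⟩
    obtain rfl | hw1 := eq_or_ne w 1
    · exact le_rfl
    obtain ⟨A, hA⟩ := exists_sym_le hw1
    obtain ⟨hwx, hwy⟩ := mem_lowerBounds_pair.1 hw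
    exact absurd ⟨A, hA.trans hwx, hA.trans hwy⟩ hc

theorem exists_isLUB_of_bddAbove {S : Set (Grp k F)} (hS : BddAbove S) : ∃ j, IsLUB S j := by
  obtain ⟨j, hj, hmin⟩ := (measure (len (F := F))).wf.has_min _ hS
  refine ⟨j, hj, fun w hw => ?_⟩
  obtain ⟨m, hm⟩ := exists_isGLB_pair j w
  obtain ⟨hmj, hmw⟩ := mem_lowerBounds_pair.1 hm.1
  have hmS : m ∈ upperBounds S := fun s hs => hm.2 (mem_lowerBounds_pair.2 ⟨hj hs, hw hs⟩)
  rwa [← eq_of_le_of_len_le hmj (not_lt.1 (hmin m hmS))]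

theorem exists_upperBound_of_pairwise : ∀ {n : ℕ} (x : Fin n → Grp k F) (z : Grp k F),
    (∀ i j, BddAbove {x i, x j}) → (∀ i, BddAbove {x i, z}) → ∃ w, z ≤ w ∧ ∀ i, x i ≤ w
  | 0, _, z, _, _ => ⟨z, le_rfl, fun i => i.elim0⟩
  | n + 1, x, z, hx, hz => by
    -- join every element with `x 0`
    choose y hy using fun i : Fin n => exists_isLUB_of_bddAbove (hx i.succ 0)
    obtain ⟨z', hz'⟩ := exists_isLUB_of_bddAbove (hz 0)
    have hyy : ∀ i j, BddAbove {y i, y j} := fun i j => by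
      obtain ⟨w, hi, hj, h0⟩ := bddAbove_triple_iff.1
        (bddAbove_triple (hx i.succ j.succ) (hx i.succ 0) (hx j.succ 0))
      exact bddAbove_pair_iff.2 ⟨w, (hy i).2 (mem_upperBounds_pair.2 ⟨hi, h0⟩),
        (hy j).2 (mem_upperBounds_pair.2 ⟨hj, h0⟩)⟩
    have hyz : ∀ i, BddAbove {y i, z'} := fun i => by
      obtain ⟨w, hi, h0, hzw⟩ := bddAbove_triple_iff.1
        (bddAbove_triple (hx i.succ 0) (hz i.succ) (hz 0))
      exact bddAbove_pair_iff.2 ⟨w, (hy i).2 (mem_upperBounds_pair.2 ⟨hi, h0⟩),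
        hz'.2 (mem_upperBounds_pair.2 ⟨h0, hzw⟩)⟩
    obtain ⟨w, hz'w, hyw⟩ := exists_upperBound_of_pairwise y z' hyy hyz
    obtain ⟨h0z', hzz'⟩ := mem_upperBounds_pair.1 hz'.1
    refine ⟨w, hzz'.trans hz'w, Fin.cases (h0z'.trans hz'w) fun i => ?_⟩
    exact (mem_upperBounds_pair.1 (hy i).1).1.trans (hyw i)

theorem bddAbove_range_of_pairwise {n : ℕ} (x : Fin n → Grp k F)
    (h : ∀ i j, BddAbove {x i, x j}) : BddAbove (Set.range x) := by
  obtain ⟨w, -, hw⟩ := exists_upperBound_of_pairwise x 1 h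
    fun i => bddAbove_pair_iff.2 ⟨x i, le_rfl, one_le _⟩
  exact ⟨w, Set.forall_mem_range.2 hw⟩

end Joins

theorem stmt4_general {k : ℕ} {F : Set (Sym2 (Fin k))}
    (t : ℕ) (x : Fin t → Grp k F)
    (h : ∀ i j, ∃ s, IsJoin (x i) (x j) s) :
    ∃ s, IsJoinSet (Set.range x) s := by
  have hpair : ∀ i j, BddAbove {x i, x j} := fun i j =>
    let ⟨s, hi, hj, _⟩ := h i j
    bddAbove_pair_iff.2 ⟨s, hi, hj⟩
  obtain ⟨s, hs⟩ := exists_isLUB_of_bddAbove (bddAbove_range_of_pairwise x hpair)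
  exact ⟨s, fun y hy => hs.1 hy, fun w hw => hs.2 hw⟩

/-- if `xᵢ ∨ xⱼ` is finite for all `i, j`, then
`x₁ ∨ ⋯ ∨ xₜ` is finite. -/
theorem stmt4 {k : ℕ} (hk : 1 ≤ k) {F : Set (Sym2 (Fin k))}
    (t : ℕ) (ht : 1 ≤ t) (x : Fin t → Grp k F)
    (h : ∀ i j, ∃ s, IsJoin (x i) (x j) s) :
    ∃ s, IsJoinSet (Set.range x) s :=
  stmt4_general t x h

end GraphGroupPaper
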